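/- arXiv:2108.05812 — 4 statements merged into one kernel-verified Lean document; each statement's English description precedes it below -/
import Mathlib

section
/- Let I be a stable monomial ideal in the skew polynomial ring R = k_q[x_1,…,x_n]. Then every monomial w ∈ I can be written uniquely as w = u * y, where u ∈ G(I), y is a monomial, and max(u) ≤ min(y) (the canonical decomposition of w). -/
open Finsupp

/-- Exponent vectors of monomials in `n` variables. -/
abbrev NExp (n : ℕ) := Fin n →₀ ℕ

/-- Integer exponent vectors (for Laurent-type arguments of the bicharacter `C`). -/
abbrev ZExp (n : ℕ) := Fin n →₀ ℤ

/-- Canonical inclusion of `ℕ`-exponent vectors into `ℤ`-exponent vectors. -/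
noncomputable def zc {n : ℕ} (a : NExp n) : ZExp n := Finsupp.mapRange (fun (m : ℕ) => (m : ℤ)) (by simp) a

/-- Total degree of a monomial. -/
def wdeg {n : ℕ} (a : NExp n) : ℕ := a.sum fun _ e => e

/-- `maxIdx a` is the 1-based index of the largest variable occurring in `x^a`
(`0` if `a = 0`, i.e. for the monomial `1`). -/
def maxIdx {n : ℕ} (a : NExp n) : ℕ := a.support.sup fun i => (i : ℕ) + 1

/-- `max(u) ≤ min(y)`: every variable occurring in `y` has (1-based) index at least
`maxIdx u`.  (This is vacuously true when `y = 0`, matching `min(1) = +∞`.) -/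
def maxLeMin {n : ℕ} (u y : NExp n) : Prop := ∀ j ∈ y.support, maxIdx u ≤ (j : ℕ) + 1

/-- Data exhibiting the ring `R` as the skew polynomial ring `k_q[x_1,…,x_n]`:
the monomials `x^a` form a `k`-basis, multiply according to the alternating
bicharacter `C`, and `C` is induced by the defining constants `q i j` with
`x_i x_j = q i j • (x_j x_i)`. -/
structure SkewPoly (k R : Type*) [CommRing k] [Ring R] [Algebra k R] (n : ℕ) : Type _ where
  /-- the monomial `x^a` -/
  mon : NExp n → R
  /-- the bicharacter `C`, defined by `x^a x^b = C(x^a,x^b) x^{a+b}` -/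
  C : ZExp n → ZExp n → kˣ
  /-- the defining constants `q_{i,j}` -/
  q : Fin n → Fin n → kˣ
  q_diag : ∀ i, q i i = 1
  q_symm : ∀ i j, q j i = (q i j)⁻¹
  /-- the monomials form a `k`-basis of `R` -/
  basis : Module.Basis (NExp n) k R
  basis_eq : ∀ a, basis a = mon a
  mon_zero : mon 0 = 1
  mon_mul : ∀ a b, mon a * mon b = ((C (zc a) (zc b) : kˣ) : k) • mon (a + b)
  C_add_left : ∀ a b c, C (a + b) c = C a c * C b c
  C_add_right : ∀ a b c, C a (b + c) = C a b * C a c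
  C_single : ∀ i j : Fin n,
    C (Finsupp.single i 1) (Finsupp.single j 1) = if j < i then q i j else 1

namespace SkewPoly

variable {k R : Type*} [CommRing k] [Ring R] [Algebra k R] {n : ℕ}

/-- The bicharacter `χ(a,b) = C(a,b)/C(b,a)`, so that `x^a x^b = χ(x^a,x^b) x^b x^a`. -/
def chi (S : SkewPoly k R n) (a b : ZExp n) : kˣ := S.C a b * (S.C b a)⁻¹

/-- The set of exponent vectors of the monomials lying in the right ideal `I`. -/
def monSet (S : SkewPoly k R n) (I : Submodule Rᵐᵒᵖ R) : Set (NExp n) :=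
  {w | S.mon w ∈ I}

/-- `I` is a monomial (right) ideal: it is generated by a set of monomials. -/
def IsMonomialIdeal (S : SkewPoly k R n) (I : Submodule Rᵐᵒᵖ R) : Prop :=
  ∃ T : Set (NExp n), I = Submodule.span Rᵐᵒᵖ (S.mon '' T)

/-- `I` is stable: for every monomial `w ∈ I` and every index `i < max(w)`,
the monomial `(x_i * w)/x_{max(w)}` lies in `I`. -/
def IsStable (S : SkewPoly k R n) (I : Submodule Rᵐᵒᵖ R) : Prop :=
  ∀ w ∈ S.monSet I, ∀ i m : Fin n, (m : ℕ) + 1 = maxIdx w → i < m →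
    w + Finsupp.single i 1 - Finsupp.single m 1 ∈ S.monSet I

/-- The canonical (minimal) monomial generating set `G(I)`: monomials of `I` that are
not proper multiples of other monomials of `I`. -/
def G (S : SkewPoly k R n) (I : Submodule Rᵐᵒᵖ R) : Set (NExp n) :=
  {u | u ∈ S.monSet I ∧ ∀ v ∈ S.monSet I, v ≤ u → v = u}

/-- `g` is the decomposition function of the stable ideal `I`: it sends a monomial
`w ∈ I` to the generator `u ∈ G(I)` of its canonical decomposition `w = u * y`,
`max(u) ≤ min(y)`. -/
def IsDecompFun (S : SkewPoly k R n) (I : Submodule Rᵐᵒᵖ R)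
    (g : NExp n → NExp n) : Prop :=
  ∀ w ∈ S.monSet I, g w ∈ S.G I ∧ g w ≤ w ∧ maxLeMin (g w) (w - g w)

end SkewPoly

section Statements

open Finsupp

variable {k R : Type*} [CommRing k] [Ring R] [Algebra k R] {n : ℕ}

/-!
Stability lets one trade the top variable `x_m` of `u` for a smaller variable `x_j` of `y`
in `w = u * y`, lowering `∑ i, i * u i`; iterating yields a decomposition with `u ∈ I` and
`max(u) ≤ min(y)`. Such decompositions cut the sorted word of `w` into a prefix and a
suffix, so their first factors form a chain under divisibility: the one of least degree
has `u ∈ G(I)`, and two with first factors in `G(I)` coincide.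
-/

lemma le_maxIdx_of_mem_support {u : NExp n} {i : Fin n} (h : i ∈ u.support) :
    (i : ℕ) + 1 ≤ maxIdx u :=
  Finset.le_sup (f := fun i : Fin n => (i : ℕ) + 1) h

lemma exists_mem_support_add_one_eq_maxIdx {u : NExp n} (h : maxIdx u ≠ 0) :
    ∃ m ∈ u.support, (m : ℕ) + 1 = maxIdx u := by
  have hne : u.support.Nonempty := by
    rw [Finset.nonempty_iff_ne_empty]
    rintro hu
    simp [maxIdx, hu] at h
  obtain ⟨m, hm, hmax⟩ := Finset.exists_mem_eq_sup u.support hne fun i => (i : ℕ) + 1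
  exact ⟨m, hm, hmax.symm⟩

/-- Off the top index of `c`, the inequality `a ≤ c` is forced by `a + b = c + d`:
below it `d` vanishes, above it `a` vanishes. -/
lemma le_of_add_eq_add_of_maxLeMin {a b c d : NExp n} (heq : a + b = c + d)
    (hcd : maxLeMin c d) (hmax : maxIdx a ≤ maxIdx c)
    (htop : ∀ i : Fin n, (i : ℕ) + 1 = maxIdx c → a i ≤ c i) : a ≤ c := by
  intro i
  by_cases hai : a i = 0
  · simp [hai]
  have hi := le_maxIdx_of_mem_support (Finsupp.mem_support_iff.2 hai)
  rcases (hi.trans hmax).eq_or_lt with htop_i | hlt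
  · exact htop i htop_i
  · have hdi : d i = 0 := by
      by_contra hdi
      have := hcd i (Finsupp.mem_support_iff.2 hdi)
      omega
    have := DFunLike.congr_fun heq i
    simp only [Finsupp.coe_add, Pi.add_apply, hdi] at this
    omega

lemma le_total_of_maxLeMin {u₁ y₁ u₂ y₂ : NExp n} (heq : u₁ + y₁ = u₂ + y₂)
    (h₁ : maxLeMin u₁ y₁) (h₂ : maxLeMin u₂ y₂) : u₁ ≤ u₂ ∨ u₂ ≤ u₁ := by
  wlog hmax : maxIdx u₁ ≤ maxIdx u₂ generalizing u₁ y₁ u₂ y₂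
  · exact (this heq.symm h₂ h₁ (by omega)).symm
  by_cases htop : ∀ i : Fin n, (i : ℕ) + 1 = maxIdx u₂ → u₁ i ≤ u₂ i
  · exact .inl (le_of_add_eq_add_of_maxLeMin heq h₂ hmax htop)
  push Not at htop
  obtain ⟨i₀, hi₀, hlt⟩ := htop
  have hmax_eq : maxIdx u₂ = maxIdx u₁ :=
    le_antisymm (hi₀ ▸ le_maxIdx_of_mem_support (Finsupp.mem_support_iff.2 (by omega))) hmax
  refine .inr (le_of_add_eq_add_of_maxLeMin heq.symm h₁ hmax_eq.le fun i hi => ?_)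
  obtain rfl : i = i₀ := Fin.ext (by omega)
  exact hlt.le

lemma eq_of_le_of_degree_le {a b : NExp n} (hab : a ≤ b) (hdeg : b.degree ≤ a.degree) :
    a = b := by
  obtain ⟨c, rfl⟩ := exists_add_of_le hab
  rw [map_add] at hdeg
  rw [(Finsupp.degree_eq_zero_iff c).1 (by omega), add_zero]

namespace SkewPoly

variable {S : SkewPoly k R n} {I : Submodule Rᵐᵒᵖ R}

/-- The move `u ↦ x_j u / x_m`, `y ↦ x_m y / x_j` for `j ∈ supp y` with `j < m = max(u)`. -/
lemma exists_stable_move (hstab : S.IsStable I) {u y : NExp n} (hu : u ∈ S.monSet I)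
    (hbad : ¬ maxLeMin u y) :
    ∃ u' y', u' ∈ S.monSet I ∧ u' + y' = u + y ∧ u'.degree = u.degree ∧
      Finsupp.weight (fun i : Fin n => (i : ℕ)) u' <
        Finsupp.weight (fun i : Fin n => (i : ℕ)) u := by
  simp only [maxLeMin, not_forall, not_le] at hbad
  obtain ⟨j, hj, hjm⟩ := hbad
  obtain ⟨m, hm, hmax⟩ := exists_mem_support_add_one_eq_maxIdx (u := u) (by omega)
  obtain ⟨u₀, rfl⟩ : ∃ u₀, u = u₀ + Finsupp.single m 1 :=
    ⟨u - Finsupp.single m 1, (tsub_add_cancel_of_le (Finsupp.single_le_iff.2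
      (Nat.one_le_iff_ne_zero.2 (Finsupp.mem_support_iff.1 hm)))).symm⟩
  obtain ⟨y₀, rfl⟩ : ∃ y₀, y = y₀ + Finsupp.single j 1 :=
    ⟨y - Finsupp.single j 1, (tsub_add_cancel_of_le (Finsupp.single_le_iff.2
      (Nat.one_le_iff_ne_zero.2 (Finsupp.mem_support_iff.1 hj)))).symm⟩
  have hmove := hstab _ hu j m hmax (by rw [Fin.lt_def]; omega)
  rw [add_right_comm, add_tsub_cancel_right] at hmove
  refine ⟨u₀ + Finsupp.single j 1, y₀ + Finsupp.single m 1, hmove, by abel, ?_, ?_⟩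
  · simp only [map_add, Finsupp.degree_single]
  · simp only [map_add, Finsupp.weight_single, smul_eq_mul, one_mul]
    omega

lemma exists_maxLeMin_decomp (hstab : S.IsStable I) {u : NExp n} (hu : u ∈ S.monSet I)
    (y : NExp n) :
    ∃ u' y', u' ∈ S.monSet I ∧ u' + y' = u + y ∧ u'.degree = u.degree ∧ maxLeMin u' y' := by
  induction hw : Finsupp.weight (fun i : Fin n => (i : ℕ)) u using Nat.strong_induction_on
    generalizing u y with
  | _ w ih =>
  by_cases hgood : maxLeMin u y
  · exact ⟨u, y, hu, rfl, rfl, hgood⟩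
  obtain ⟨u', y', hu', hsum, hdeg, hlt⟩ := exists_stable_move hstab hu hgood
  obtain ⟨u'', y'', hu'', hsum', hdeg', hgood'⟩ := ih _ (hw ▸ hlt) hu' y' rfl
  exact ⟨u'', y'', hu'', hsum'.trans hsum, hdeg'.trans hdeg, hgood'⟩

/-- A decomposition `w = u * y` with `u ∈ I`, `max(u) ≤ min(y)` and `deg u` minimal has
`u ∈ G(I)`: a proper divisor `v ∈ I` of `u` would yield, by stability, such a
decomposition with `deg v < deg u`. -/
lemma exists_mem_G_maxLeMin_decomp (hstab : S.IsStable I) {w : NExp n}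
    (hw : w ∈ S.monSet I) : ∃ u y, u ∈ S.G I ∧ u + y = w ∧ maxLeMin u y := by
  classical
  have hex : ∃ d, ∃ u y, u ∈ S.monSet I ∧ u + y = w ∧ maxLeMin u y ∧ u.degree = d := by
    obtain ⟨u, y, hu, hsum, -, hgood⟩ := exists_maxLeMin_decomp hstab hw 0
    exact ⟨_, u, y, hu, by rwa [add_zero] at hsum, hgood, rfl⟩
  obtain ⟨u, y, hu, hsum, hgood, hdeg⟩ := Nat.find_spec hex
  refine ⟨u, y, ⟨hu, fun v hv hvu => eq_of_le_of_degree_le hvu ?_⟩, hsum, hgood⟩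
  obtain ⟨v', y', hv', hsum', hdeg', hgood'⟩ := exists_maxLeMin_decomp hstab hv (w - v)
  rw [add_tsub_cancel_of_le (hvu.trans (hsum ▸ le_self_add))] at hsum'
  exact hdeg ▸ hdeg' ▸ Nat.find_min' hex ⟨v', y', hv', hsum', hgood', rfl⟩

lemma eq_of_mem_G_of_maxLeMin {u₁ y₁ u₂ y₂ : NExp n} (hu₁ : u₁ ∈ S.G I) (hu₂ : u₂ ∈ S.G I)
    (heq : u₁ + y₁ = u₂ + y₂) (h₁ : maxLeMin u₁ y₁) (h₂ : maxLeMin u₂ y₂) : u₁ = u₂ := by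
  rcases le_total_of_maxLeMin heq h₁ h₂ with h | h
  · exact hu₂.2 u₁ hu₁.1 h
  · exact (hu₁.2 u₂ hu₂.1 h).symm

end SkewPoly

theorem stmt0_general
    (S : SkewPoly k R n) (I : Submodule Rᵐᵒᵖ R)
    (hstab : S.IsStable I) :
    ∀ w ∈ S.monSet I, ∃! p : NExp n × NExp n,
      p.1 ∈ S.G I ∧ w = p.1 + p.2 ∧ maxLeMin p.1 p.2 := by
  intro w hw
  obtain ⟨u, y, hu, hsum, hgood⟩ := S.exists_mem_G_maxLeMin_decomp hstab hw
  refine ⟨(u, y), ⟨hu, hsum.symm, hgood⟩, ?_⟩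
  rintro ⟨u', y'⟩ ⟨hu', hw', hgood'⟩
  have hsum' : u' + y' = u + y := hw'.symm.trans hsum.symm
  obtain rfl := SkewPoly.eq_of_mem_G_of_maxLeMin hu' hu hsum' hgood' hgood
  rw [add_left_cancel hsum']

theorem stmt0 [IsNoetherianRing k]
    (S : SkewPoly k R n) (I : Submodule Rᵐᵒᵖ R)
    (hmono : S.IsMonomialIdeal I) (hstab : S.IsStable I) :
    ∀ w ∈ S.monSet I, ∃! p : NExp n × NExp n,
      p.1 ∈ S.G I ∧ w = p.1 + p.2 ∧ maxLeMin p.1 p.2 :=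
  stmt0_general S I hstab

end Statements
end

section
/- Let I be a stable monomial ideal in the skew polynomial ring R, let w be a monomial in I, and let v be any monomial of R. Then g(v * w) = g(w) if and only if max(g(w)) ≤ min(v). -/
open Finsupp

/-!
A right monomial ideal contains `v * w` whenever it contains `w`, since `x^w x^v` differs from
`x^{v+w}` by a unit of `k`. A splitting `z = u * y` with `u ∈ G(I)` and `max(u) ≤ min(y)` is
unique: two such `u` divide one another in some order, so they agree by minimality. Since
`v * w = g(w) * (v * (w / g(w)))`, this splitting of `v * w` has first factor `g(w)` exactly
when `max(g(w)) ≤ min(v)`.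
-/

section Statements

open Finsupp

variable {k R : Type*} [CommRing k] [Ring R] [Algebra k R] {n : ℕ}

theorem le_maxIdx {a : NExp n} {j : Fin n} (hj : j ∈ a.support) : (j : ℕ) + 1 ≤ maxIdx a :=
  Finset.le_sup (f := fun i : Fin n => (i : ℕ) + 1) hj

theorem maxLeMin_add_iff {u a b : NExp n} :
    maxLeMin u (a + b) ↔ maxLeMin u a ∧ maxLeMin u b := by
  classical
  simp only [maxLeMin, Finsupp.support_add_eq_union, Finset.mem_union]
  exact ⟨fun h => ⟨fun j hj => h j (.inl hj), fun j hj => h j (.inr hj)⟩,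
    fun h j hj => hj.elim (h.1 j) (h.2 j)⟩

theorem le_total_of_maxLeMin_tsub {u₁ u₂ z : NExp n} (hle₁ : u₁ ≤ z) (hle₂ : u₂ ≤ z)
    (hm₁ : maxLeMin u₁ (z - u₁)) (hm₂ : maxLeMin u₂ (z - u₂)) : u₁ ≤ u₂ ∨ u₂ ≤ u₁ := by
  by_contra! h
  obtain ⟨⟨j, hj⟩, ⟨j', hj'⟩⟩ : (∃ j, u₂ j < u₁ j) ∧ ∃ j, u₁ j < u₂ j := by
    simpa only [Finsupp.le_def, not_forall, not_le] using h
  -- an index where `u₁` exceeds `u₂` is at most `max u₁`, which is at most any index where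
  -- `u₂` exceeds `u₁` (that index survives in `z - u₁`); by symmetry both indices coincide
  have h₁ : maxIdx u₁ ≤ (j' : ℕ) + 1 := hm₁ j' <| by
    have := hle₂ j'; simp only [Finsupp.mem_support_iff, Finsupp.tsub_apply]; omega
  have h₂ : maxIdx u₂ ≤ (j : ℕ) + 1 := hm₂ j <| by
    have := hle₁ j; simp only [Finsupp.mem_support_iff, Finsupp.tsub_apply]; omega
  have h₃ : (j : ℕ) + 1 ≤ maxIdx u₁ := le_maxIdx (Finsupp.mem_support_iff.mpr (by omega))
  have h₄ : (j' : ℕ) + 1 ≤ maxIdx u₂ := le_maxIdx (Finsupp.mem_support_iff.mpr (by omega))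
  obtain rfl : j = j' := Fin.ext (by omega)
  omega

namespace SkewPoly

theorem add_mem_monSet (S : SkewPoly k R n) (I : Submodule Rᵐᵒᵖ R) {w : NExp n}
    (hw : w ∈ S.monSet I) (v : NExp n) : v + w ∈ S.monSet I := by
  set c := S.C (zc w) (zc v)
  have hmul : MulOpposite.op (S.mon v) • S.mon w ∈ I := I.smul_mem _ hw
  rw [op_smul_eq_mul, S.mon_mul] at hmul
  have hunit := I.smul_mem (MulOpposite.op (algebraMap k R ((c⁻¹ : kˣ) : k))) hmul
  rw [op_smul_eq_mul, ← Algebra.commutes, ← Algebra.smul_def, smul_smul, Units.inv_mul,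
    one_smul] at hunit
  change S.mon (v + w) ∈ I
  rwa [add_comm]

theorem eq_of_mem_G_of_maxLeMin_tsub (S : SkewPoly k R n) (I : Submodule Rᵐᵒᵖ R)
    {u₁ u₂ z : NExp n} (h₁ : u₁ ∈ S.G I) (h₂ : u₂ ∈ S.G I) (hle₁ : u₁ ≤ z) (hle₂ : u₂ ≤ z)
    (hm₁ : maxLeMin u₁ (z - u₁)) (hm₂ : maxLeMin u₂ (z - u₂)) : u₁ = u₂ :=
  (le_total_of_maxLeMin_tsub hle₁ hle₂ hm₁ hm₂).elim (h₂.2 u₁ h₁.1) fun h => (h₁.2 u₂ h₂.1 h).symm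

end SkewPoly

theorem stmt1_general
    (S : SkewPoly k R n) (I : Submodule Rᵐᵒᵖ R)
    (g : NExp n → NExp n) (hg : S.IsDecompFun I g) :
    ∀ w ∈ S.monSet I, ∀ v : NExp n, g (v + w) = g w ↔ maxLeMin (g w) v := by
  intro w hw v
  obtain ⟨hG, hle, hmax⟩ := hg w hw
  obtain ⟨hG', hle', hmax'⟩ := hg (v + w) (S.add_mem_monSet I hw v)
  have hsplit : v + w - g w = v + (w - g w) := add_tsub_assoc_of_le hle v
  constructor
  · intro heq
    rw [heq, hsplit, maxLeMin_add_iff] at hmax'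
    exact hmax'.1
  · intro hv
    refine S.eq_of_mem_G_of_maxLeMin_tsub I hG' hG hle' (hle.trans le_add_self) hmax' ?_
    rw [hsplit, maxLeMin_add_iff]
    exact ⟨hv, hmax⟩

theorem stmt1 [IsNoetherianRing k]
    (S : SkewPoly k R n) (I : Submodule Rᵐᵒᵖ R)
    (hmono : S.IsMonomialIdeal I) (hstab : S.IsStable I)
    (g : NExp n → NExp n) (hg : S.IsDecompFun I g) :
    ∀ w ∈ S.monSet I, ∀ v : NExp n, g (v + w) = g w ↔ maxLeMin (g w) v :=
  stmt1_general S I g hg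

end Statements
end

section
/- Let k be a field and I a stable monomial ideal in the skew polynomial ring R = k_q[x_1,…,x_n]. Then the skew Eliahou–Kervaire resolution of I is minimal: d(L_q(I)) ⊆ (x_1,…,x_n)·L_{q−1}(I) for all q ≥ 1. -/
/-! Every entry of `d e(σ;u)` is a scalar multiple of a monomial `x_{i_r}` or `y_r`, so it suffices
that `y_r ≠ 1`. If `y_r = 1`, then `x_{i_r} * u = u_r` would lie in `G(I)`, although it is a proper
multiple of the monomial `u ∈ I`. -/

open Finsupp

section Complex

open Finsupp

/-- Symbols `e(i_1,…,i_q; u)`: a list of variable indices together with a monomial. -/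
abbrev EKSym (n : ℕ) := List (Fin n) × NExp n

/-- The exponent vector of `x_σ = x_{i_1} ⋯ x_{i_q}`. -/
noncomputable def listMon {n : ℕ} (σ : List (Fin n)) : NExp n :=
  (σ.map fun i => Finsupp.single i 1).sum

variable {k R : Type*} [CommRing k] [Ring R] [Algebra k R] {n : ℕ}

/-- Right action of `R` on the free right `R`-module `EKSym n →₀ R`. -/
noncomputable def rmul (f : EKSym n →₀ R) (r : R) : EKSym n →₀ R :=
  f.mapRange (· * r) (zero_mul r)

/-- A symbol `e(i_1,…,i_q;u)` is admissible for `I` when `u ∈ G(I)` and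
`1 ≤ i_1 < ⋯ < i_q < max(u)`. -/
def Adm (S : SkewPoly k R n) (I : Submodule Rᵐᵒᵖ R) (s : EKSym n) : Prop :=
  s.1.Pairwise (· < ·) ∧ s.2 ∈ S.G I ∧ ∀ i ∈ s.1, (i : ℕ) + 1 < maxIdx s.2

/-- The value of the differential `D` of the big complex `K_•(I)` on the symbol
`e(σ;u)`:
`D e(σ;u) = Σ_r (−1)^r e(σ_r;u) C(x_{σ_r}*u, x_{i_r})⁻¹ x_{i_r}
          − Σ_r (−1)^r e(σ_r;u_r) C(x_{σ_r}, y_r)⁻¹ y_r`,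
where `u_r = g(x_{i_r} * u)` and `y_r = (x_{i_r} * u)/u_r`. -/
noncomputable def Dsym (S : SkewPoly k R n) (g : NExp n → NExp n) (s : EKSym n) :
    EKSym n →₀ R :=
  ∑ r : Fin s.1.length,
    ((-1 : k) ^ ((r : ℕ) + 1)) •
      (Finsupp.single (s.1.eraseIdx (r : ℕ), s.2)
          ((((S.C (zc (listMon (s.1.eraseIdx (r : ℕ)) + s.2))
              (Finsupp.single (s.1.get r) (1 : ℤ)))⁻¹ : kˣ) : k) •
            S.mon (Finsupp.single (s.1.get r) 1))
       - Finsupp.single (s.1.eraseIdx (r : ℕ), g (Finsupp.single (s.1.get r) 1 + s.2))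
          ((((S.C (zc (listMon (s.1.eraseIdx (r : ℕ))))
              (zc (Finsupp.single (s.1.get r) 1 + s.2
                    - g (Finsupp.single (s.1.get r) 1 + s.2))))⁻¹ : kˣ) : k) •
            S.mon (Finsupp.single (s.1.get r) 1 + s.2
                    - g (Finsupp.single (s.1.get r) 1 + s.2))))

/-- The differential `D : K_•(I) → K_•(I)` extended right-`R`-linearly. -/
noncomputable def Dfun (S : SkewPoly k R n) (g : NExp n → NExp n)
    (f : EKSym n →₀ R) : EKSym n →₀ R :=
  f.sum fun s r => rmul (Dsym S g s) r

open scoped Classical in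
/-- The value of the Eliahou–Kervaire differential `d` of `L_•(I)` on `e(σ;u)`:
as for `D`, but the second sum is restricted to `A(σ;u)`, i.e. to those `r` for
which `e(σ_r;u_r)` is admissible. -/
noncomputable def dsym (S : SkewPoly k R n) (I : Submodule Rᵐᵒᵖ R)
    (g : NExp n → NExp n) (s : EKSym n) : EKSym n →₀ R :=
  ∑ r : Fin s.1.length,
    ((-1 : k) ^ ((r : ℕ) + 1)) •
      (Finsupp.single (s.1.eraseIdx (r : ℕ), s.2)
          ((((S.C (zc (listMon (s.1.eraseIdx (r : ℕ)) + s.2))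
              (Finsupp.single (s.1.get r) (1 : ℤ)))⁻¹ : kˣ) : k) •
            S.mon (Finsupp.single (s.1.get r) 1))
       - if Adm S I (s.1.eraseIdx (r : ℕ), g (Finsupp.single (s.1.get r) 1 + s.2)) then
          Finsupp.single (s.1.eraseIdx (r : ℕ), g (Finsupp.single (s.1.get r) 1 + s.2))
          ((((S.C (zc (listMon (s.1.eraseIdx (r : ℕ))))
              (zc (Finsupp.single (s.1.get r) 1 + s.2
                    - g (Finsupp.single (s.1.get r) 1 + s.2))))⁻¹ : kˣ) : k) •
            S.mon (Finsupp.single (s.1.get r) 1 + s.2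
                    - g (Finsupp.single (s.1.get r) 1 + s.2)))
         else 0)

/-- The Eliahou–Kervaire differential `d : L_•(I) → L_•(I)` extended
right-`R`-linearly. -/
noncomputable def dfun (S : SkewPoly k R n) (I : Submodule Rᵐᵒᵖ R)
    (g : NExp n → NExp n) (f : EKSym n →₀ R) : EKSym n →₀ R :=
  f.sum fun s r => rmul (dsym S I g s) r

open scoped Classical in
/-- The augmentation `ε : L_0(I) → R`, `e(∅;u) ↦ u`. -/
noncomputable def epsfun (S : SkewPoly k R n) (f : EKSym n →₀ R) : R :=
  f.sum fun s r => if s.1 = [] then S.mon s.2 * r else 0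

/-- Membership in the subcomplex `J`: the last index satisfies `i_q ≥ max(u)`. -/
def JSym {n : ℕ} (s : EKSym n) : Prop :=
  ∃ m : Fin n, s.1.getLast? = some m ∧ maxIdx s.2 ≤ (m : ℕ) + 1

/-- Two integer exponent vectors have the same `G`-degree. -/
def GdegEq (S : SkewPoly k R n) (a b : ZExp n) : Prop := ∀ c, S.chi a c = S.chi b c

end Complex

theorem Submodule.algebra_smul_mem_of_op {k R : Type*} [CommRing k] [Ring R] [Algebra k R]
    {I : Submodule Rᵐᵒᵖ R} (c : k) {x : R} (hx : x ∈ I) : c • x ∈ I := by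
  rw [Algebra.smul_def, Algebra.commutes, ← op_smul_eq_mul]
  exact I.smul_mem _ hx

namespace SkewPoly

variable {k R : Type*} [CommRing k] [Ring R] [Algebra k R] {n : ℕ} (S : SkewPoly k R n)

theorem repr_smul_mon_zero {a : NExp n} (ha : a ≠ 0) (c : k) :
    S.basis.repr (c • S.mon a) 0 = 0 := by
  rw [map_smul, ← S.basis_eq, Module.Basis.repr_self, Finsupp.smul_apply,
    Finsupp.single_eq_of_ne' ha, smul_zero]

theorem repr_single_smul_mon_zero {a : NExp n} (ha : a ≠ 0) (s t : EKSym n) (c : k) :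
    S.basis.repr (Finsupp.single s (c • S.mon a) t) 0 = 0 := by
  classical
  rw [Finsupp.single_apply]
  split_ifs
  · exact S.repr_smul_mon_zero ha c
  · simp

theorem add_mem_monSet_s8 {I : Submodule Rᵐᵒᵖ R} {u : NExp n} (hu : u ∈ S.monSet I) (a : NExp n) :
    u + a ∈ S.monSet I := by
  have hmul : S.mon u * S.mon a ∈ I := I.smul_mem (MulOpposite.op (S.mon a)) hu
  rw [S.mon_mul] at hmul
  simpa [monSet, smul_smul] using I.algebra_smul_mem_of_op (((S.C (zc u) (zc a))⁻¹ : kˣ) : k) hmul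

theorem add_notMem_G {I : Submodule Rᵐᵒᵖ R} {u : NExp n} (hu : u ∈ S.G I) {a : NExp n}
    (ha : a ≠ 0) : a + u ∉ S.G I := fun hau =>
  ha (by simpa using hau.2 u hu.1 le_add_self)

theorem decomp_cofactor_ne_zero {I : Submodule Rᵐᵒᵖ R} {g : NExp n → NExp n}
    (hg : S.IsDecompFun I g) {u : NExp n} (hu : u ∈ S.G I) {a : NExp n} (ha : a ≠ 0) :
    a + u - g (a + u) ≠ 0 := by
  intro h
  obtain ⟨hG, hle, -⟩ := hg (a + u) (add_comm u a ▸ S.add_mem_monSet_s8 hu.1 a)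
  rw [le_antisymm hle (tsub_eq_zero_iff_le.mp h)] at hG
  exact S.add_notMem_G hu ha hG

end SkewPoly

section Statements

open Finsupp

variable {k R : Type*} [CommRing k] [Ring R] [Algebra k R] {n : ℕ}

theorem stmt8_general {k R : Type*} [Field k] [Ring R] [Algebra k R] {n : ℕ}
    (S : SkewPoly k R n) (I : Submodule Rᵐᵒᵖ R)
    (g : NExp n → NExp n) (hg : S.IsDecompFun I g) :
    ∀ s : EKSym n, Adm S I s → ∀ t : EKSym n,
      S.basis.repr (dsym S I g s t) 0 = 0 := by
  intro s hs t
  have hsingle : ∀ i : Fin n, Finsupp.single i (1 : ℕ) ≠ 0 := fun _ =>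
    Finsupp.single_ne_zero.mpr one_ne_zero
  rw [dsym, Finsupp.finsetSum_apply, map_sum, Finsupp.finsetSum_apply]
  refine Finset.sum_eq_zero fun r _ => ?_
  simp only [Finsupp.smul_apply, map_smul, Finsupp.sub_apply, map_sub,
    S.repr_single_smul_mon_zero (hsingle _), zero_sub, smul_eq_zero, neg_eq_zero]
  right
  split_ifs
  · exact S.repr_single_smul_mon_zero (S.decomp_cofactor_ne_zero hg hs.2.1 (hsingle _)) _ _ _
  · simp

theorem stmt8 {k R : Type*} [Field k] [Ring R] [Algebra k R] {n : ℕ}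
    (S : SkewPoly k R n) (I : Submodule Rᵐᵒᵖ R)
    (hmono : S.IsMonomialIdeal I) (hstab : S.IsStable I)
    (g : NExp n → NExp n) (hg : S.IsDecompFun I g) :
    ∀ s : EKSym n, Adm S I s → ∀ t : EKSym n,
      S.basis.repr (dsym S I g s t) 0 = 0 :=
  stmt8_general S I g hg

end Statements
end

section
/- For all integers n ≥ 1, d ≥ 1 and q ≥ 0, the sum over the monomials of degree d in n variables of binom(max(u) − 1, q) equals binom(d+n−1, d+q) · binom(d+q−1, q); that is, Σ_{a ∈ ℕ^n, a_1+⋯+a_n = d} binom(max(a) − 1, q) = binom(d+n−1, d+q) · binom(d+q−1, q), where max(a) denotes the largest index i with a_i > 0. -/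
/-!
Split the tuples `a : Fin (n + 1) → ℕ` of degree `d = e + 1` by their last coordinate. Those
with last coordinate `0` are the tuples of length `n` and keep their `max`; the others have
`max a = n + 1` and, after lowering the last coordinate by one, are the tuples of length `n + 1`
and degree `e`, so by stars and bars there are `C(n + e, e)` of them. Hence
`∑ₐ G (max a) = ∑_{m < n} C(m + e, e) G (m + 1)` for every `G`. For `G m = C(m - 1, q)` the
trinomial revision `C(m + e, e) C(m, q) = C(m + e, q + e) C(q + e, q)` turns the summand into a
multiple of `C(m + e, q + e)`, and Pascal's rule sums these.
-/

open Finset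

/-- The paper's `max a`: the 1-based index of the last nonzero coordinate, and `0` for `a = 0`. -/
def maxNonzeroIndex {M : Type*} [Zero M] [DecidableEq M] {n : ℕ} (a : Fin n → M) : ℕ :=
  (univ.filter fun i : Fin n => a i ≠ 0).sup fun i => (i : ℕ) + 1

section maxNonzeroIndex

variable {M : Type*} [Zero M] [DecidableEq M] {n : ℕ}

lemma maxNonzeroIndex_snoc_zero (a : Fin n → M) :
    maxNonzeroIndex (Fin.snoc a 0 : Fin (n + 1) → M) = maxNonzeroIndex a := by
  have hsupp : (univ.filter fun i => (Fin.snoc a 0 : Fin (n + 1) → M) i ≠ 0)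
      = (univ.filter fun i => a i ≠ 0).map Fin.castSuccEmb := by
    ext i
    cases i using Fin.lastCases <;> simp
  rw [maxNonzeroIndex, hsupp, sup_map]
  rfl

lemma maxNonzeroIndex_of_last_ne_zero {a : Fin (n + 1) → M} (h : a (Fin.last n) ≠ 0) :
    maxNonzeroIndex a = n + 1 :=
  le_antisymm (Finset.sup_le fun i _ => i.is_lt)
    (Finset.le_sup (f := fun i : Fin (n + 1) => (i : ℕ) + 1) (b := Fin.last n)
      (by simpa using h))

end maxNonzeroIndex

namespace Finset.Nat

lemma card_antidiagonalTuple (k n : ℕ) : #(antidiagonalTuple k n) = (k + n - 1).choose n := by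
  rw [← piAntidiag_univ_fin_eq_antidiagonalTuple, ← map_sym_eq_piAntidiag, card_map,
    sym_univ, card_univ, Sym.card_sym_eq_choose, Fintype.card_fin]

lemma sum_filter_antidiagonalTuple_last_eq_zero {M : Type*} [AddCommMonoid M] (n d : ℕ)
    (f : (Fin (n + 1) → ℕ) → M) :
    ∑ a ∈ antidiagonalTuple (n + 1) d with a (Fin.last n) = 0, f a
      = ∑ b ∈ antidiagonalTuple n d, f (Fin.snoc b 0) := by
  refine (sum_nbij' (fun b => Fin.snoc b 0) Fin.init ?_ ?_ ?_ ?_ ?_).symm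
  · intro b hb
    simpa [mem_antidiagonalTuple, Fin.sum_univ_castSucc] using hb
  · intro a ha
    simp only [mem_filter, mem_antidiagonalTuple, Fin.sum_univ_castSucc] at ha
    simpa [mem_antidiagonalTuple, Fin.init, ha.2] using ha.1
  · intro b _
    simp
  · intro a ha
    rw [← (mem_filter.1 ha).2, Fin.snoc_init_self]
  · intro b _
    rfl

lemma card_filter_antidiagonalTuple_last_ne_zero (n e : ℕ) :
    #{a ∈ antidiagonalTuple (n + 1) (e + 1) | a (Fin.last n) ≠ 0}
      = #(antidiagonalTuple (n + 1) e) := by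
  refine card_nbij' (fun a => Fin.snoc (Fin.init a) (a (Fin.last n) - 1))
    (fun b => Fin.snoc (Fin.init b) (b (Fin.last n) + 1)) ?_ ?_ ?_ ?_
  · intro a ha
    simp [mem_antidiagonalTuple, Fin.sum_univ_castSucc, Fin.init] at ha ⊢
    omega
  · intro b hb
    simp [mem_antidiagonalTuple, Fin.sum_univ_castSucc, Fin.init] at hb ⊢
    omega
  · intro a ha
    simp only [coe_filter, Set.mem_ofPred_eq] at ha
    simp [Nat.sub_add_cancel (Nat.pos_of_ne_zero ha.2)]
  · intro b _
    simp

lemma sum_antidiagonalTuple_succ_maxNonzeroIndex {M : Type*} [AddCommMonoid M] (G : ℕ → M)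
    (n e : ℕ) :
    ∑ a ∈ antidiagonalTuple (n + 1) (e + 1), G (maxNonzeroIndex a)
      = ∑ a ∈ antidiagonalTuple n (e + 1), G (maxNonzeroIndex a)
        + (n + e).choose e • G (n + 1) := by
  rw [← sum_filter_add_sum_filter_not _ fun a => a (Fin.last n) = 0,
    sum_filter_antidiagonalTuple_last_eq_zero]
  congr 1
  · simp only [maxNonzeroIndex_snoc_zero]
  · rw [sum_congr rfl fun a ha =>
        congrArg G (maxNonzeroIndex_of_last_ne_zero (mem_filter.1 ha).2),
      sum_const, card_filter_antidiagonalTuple_last_ne_zero, card_antidiagonalTuple,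
      Nat.add_right_comm n 1 e, Nat.add_sub_cancel]

lemma sum_antidiagonalTuple_maxNonzeroIndex {M : Type*} [AddCommMonoid M] (G : ℕ → M)
    (n e : ℕ) :
    ∑ a ∈ antidiagonalTuple n (e + 1), G (maxNonzeroIndex a)
      = ∑ m ∈ range n, (m + e).choose e • G (m + 1) := by
  induction n with
  | zero => simp
  | succ n ih => rw [sum_antidiagonalTuple_succ_maxNonzeroIndex, ih, sum_range_succ]

end Finset.Nat

lemma add_choose_right_mul_choose (m e q : ℕ) :
    (m + e).choose e * m.choose q = (m + e).choose (q + e) * (q + e).choose q := by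
  rcases le_or_gt q m with hqm | hmq
  · rw [← Nat.choose_symm_add, Nat.choose_mul hqm, Nat.choose_mul (Nat.le_add_right q e),
      Nat.add_sub_cancel_left, Nat.choose_symm_of_eq_add (by omega : m + e - q = m - q + e)]
  · rw [Nat.choose_eq_zero_of_lt hmq, Nat.choose_eq_zero_of_lt (by omega : m + e < q + e),
      mul_zero, zero_mul]

lemma sum_range_add_choose_mul_choose (n e q : ℕ) :
    ∑ m ∈ range n, (m + e).choose e * m.choose q
      = (n + e).choose (q + e + 1) * (q + e).choose q := by
  induction n with
  | zero => simp [Nat.choose_eq_zero_of_lt (by omega : e < q + e + 1)]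
  | succ n ih =>
    rw [sum_range_succ, ih, add_choose_right_mul_choose, Nat.add_right_comm n 1 e,
      Nat.choose_succ_succ', add_mul, add_comm]

theorem stmt13_general (n d q : ℕ) (hd : 1 ≤ d) :
    (∑ a ∈ Finset.Nat.antidiagonalTuple n d,
        ((((Finset.univ.filter fun i : Fin n => a i ≠ 0).sup
            fun i => (i : ℕ) + 1) - 1).choose q))
      = (d + n - 1).choose (d + q) * (d + q - 1).choose q := by
  obtain ⟨e, rfl⟩ := Nat.exists_eq_add_of_le' hd
  have h := Nat.sum_antidiagonalTuple_maxNonzeroIndex (fun m => (m - 1).choose q) n e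
  simp only [Nat.add_sub_cancel, smul_eq_mul] at h
  unfold maxNonzeroIndex at h
  rw [h, sum_range_add_choose_mul_choose]
  congr 2 <;> omega

theorem stmt13 (n d q : ℕ) (hn : 1 ≤ n) (hd : 1 ≤ d) :
    (∑ a ∈ Finset.Nat.antidiagonalTuple n d,
        ((((Finset.univ.filter fun i : Fin n => a i ≠ 0).sup
            fun i => (i : ℕ) + 1) - 1).choose q))
      = (d + n - 1).choose (d + q) * (d + q - 1).choose q :=
  stmt13_general n d q hd
end
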